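/- Setting σ̂_t² = s·(1 − α̂_{t−1})(α̂_{t−1} − α̂_t)/(1 − α̂_t) with s = 2, the reverse coefficients simplify to κ_t = (1 − α̂_{t−1})/(1 − α̂_t), λ_t = (α̂_{t−1} − α̂_t)/(1 − α̂_t), and ζ_t = 0. In particular the prior term h drops out of the reverse mean. -/

import Mathlib

/-- With `σ̂_t² = 2(1−α̂_{t−1})(α̂_{t−1}−α̂_t)/(1−α̂_t)` (the `s = 2` case), the
Brownian-bridge reverse coefficients simplify to `κ_t = (1−α̂_{t−1})/(1−α̂_t)`,
`λ_t = (α̂_{t−1}−α̂_t)/(1−α̂_t)` and `ζ_t = 0`: the prior `h` drops out. -/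
theorem stmt_6 (αt αp : ℝ) (h1 : 0 < αt) (h2 : αt < αp) (h3 : αp < 1)
    (σ2 κ lam ζ : ℝ)
    (hσ : σ2 = 2 * (1 - αp) * (αp - αt) / (1 - αt))
    (hκ : κ = Real.sqrt ((2 * αp * (1 - αp) - σ2) / (2 * αt * (1 - αt))))
    (hlam : lam = αp - αt * κ)
    (hζ : ζ = (1 - αp) - κ * (1 - αt)) :
    κ = (1 - αp) / (1 - αt) ∧ lam = (αp - αt) / (1 - αt) ∧ ζ = 0 := by
  have ht1 : (1 : ℝ) - αt > 0 := by linarith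
  have ht1' : (1 : ℝ) - αt ≠ 0 := ne_of_gt ht1
  have hαtne : αt ≠ 0 := ne_of_gt h1
  have harg : (2 * αp * (1 - αp) - σ2) / (2 * αt * (1 - αt))
      = ((1 - αp) / (1 - αt)) ^ 2 := by
    rw [hσ]
    field_simp
    ring
  have hκ' : κ = (1 - αp) / (1 - αt) := by
    rw [hκ, harg, Real.sqrt_sq (div_nonneg (by linarith) (le_of_lt ht1))]
  refine ⟨hκ', ?_, ?_⟩
  · rw [hlam, hκ']; field_simp; ring
  · rw [hζ, hκ']; field_simp; ring
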